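/- Proposition 4.4: Let X be a real inner product space and let 𝓜 : X → ℝ be Fréchet differentiable, with gradient ∇𝓜 : X → X (i.e. the derivative of 𝓜 at η applied to v equals ⟨∇𝓜(η), v⟩). Assume ∇𝓜 is Lipschitz continuous with constant L > 0, and that there exist η* ∈ X and M₀ > 0 such that |𝓜(η₁) − 𝓜(η₂)| ≥ M₀ ‖η₁ − η₂‖ for all η₁, η₂ in the closed ball B of radius M₀/(4L) centered at η*. Then for all η₁, η₂ ∈ B, |𝓜(η₁) − 𝓜(η₂) − ⟨∇𝓜(η₂), η₁ − η₂⟩| ≤ (1/2) |𝓜(η₁) − 𝓜(η₂)|. -/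
import Mathlib


open scoped RealInnerProductSpace

/-- Proposition 4.4: let `𝓜 : X → ℝ` be Fréchet differentiable on a real
inner product space with gradient `G` (i.e. the derivative at `η` is
`v ↦ ⟪G η, v⟫`), with `G` Lipschitz of constant `L > 0`. If
`|𝓜 η₁ − 𝓜 η₂| ≥ M₀ ‖η₁ − η₂‖` on the closed ball `B(η*, M₀/(4L))`, then on
that ball `|𝓜 η₁ − 𝓜 η₂ − ⟪G η₂, η₁ − η₂⟫| ≤ (1/2)|𝓜 η₁ − 𝓜 η₂|`. -/
theorem gradient_linearization_control
    {X : Type*} [NormedAddCommGroup X] [InnerProductSpace ℝ X]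
    (𝓜 : X → ℝ) (G : X → X) (L M₀ : ℝ) (hL : 0 < L) (hM₀ : 0 < M₀) (ηstar : X)
    (hgrad : ∀ η : X, HasFDerivAt 𝓜 (innerSL ℝ (G η)) η)
    (hLip : ∀ η η' : X, ‖G η - G η'‖ ≤ L * ‖η - η'‖)
    (hlow : ∀ η₁ ∈ Metric.closedBall ηstar (M₀ / (4 * L)),
            ∀ η₂ ∈ Metric.closedBall ηstar (M₀ / (4 * L)),
            M₀ * ‖η₁ - η₂‖ ≤ |𝓜 η₁ - 𝓜 η₂|) :
    ∀ η₁ ∈ Metric.closedBall ηstar (M₀ / (4 * L)),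
    ∀ η₂ ∈ Metric.closedBall ηstar (M₀ / (4 * L)),
      |𝓜 η₁ - 𝓜 η₂ - ⟪G η₂, η₁ - η₂⟫| ≤ (1 / 2) * |𝓜 η₁ - 𝓜 η₂| := by
  intro η₁ h₁ η₂ h₂
  set f : X → ℝ := fun x => 𝓜 x - ⟪G η₂, x⟫ with hf
  have hder : ∀ x ∈ segment ℝ η₂ η₁,
      HasFDerivWithinAt f (innerSL ℝ (G x - G η₂)) (segment ℝ η₂ η₁) x := by
    intro x hx
    have : HasFDerivAt f (innerSL ℝ (G x) - innerSL ℝ (G η₂)) x :=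
      (hgrad x).sub ((innerSL ℝ (G η₂)).hasFDerivAt)
    rw [show innerSL ℝ (G x) - innerSL ℝ (G η₂) = innerSL ℝ (G x - G η₂) by
      simp [map_sub]] at this
    exact this.hasFDerivWithinAt
  have hbound : ∀ x ∈ segment ℝ η₂ η₁,
      ‖innerSL ℝ (G x - G η₂)‖ ≤ L * ‖η₁ - η₂‖ := by
    intro x hx
    rw [innerSL_apply_norm]
    refine (hLip x η₂).trans ?_
    gcongr
    obtain ⟨a, b, ha, hb, hab, rfl⟩ := hx
    have : a • η₂ + b • η₁ - η₂ = b • (η₁ - η₂) := by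
      rw [smul_sub]
      have : a • η₂ = (1 - b) • η₂ := by rw [← hab]; ring_nf
      rw [this]; module
    rw [this, norm_smul, Real.norm_eq_abs, abs_of_nonneg hb]
    nlinarith [norm_nonneg (η₁ - η₂)]
  have key := (convex_segment η₂ η₁).norm_image_sub_le_of_norm_hasFDerivWithin_le
      hder hbound (left_mem_segment ℝ η₂ η₁) (right_mem_segment ℝ η₂ η₁)
  have hfe : f η₁ - f η₂ = 𝓜 η₁ - 𝓜 η₂ - ⟪G η₂, η₁ - η₂⟫ := by
    simp [hf, inner_sub_right]; ring
  rw [hfe] at key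
  have hdist : ‖η₁ - η₂‖ ≤ M₀ / (2 * L) := by
    have := dist_triangle_right η₁ η₂ ηstar
    rw [Metric.mem_closedBall] at h₁ h₂
    rw [← dist_eq_norm]
    have h4 : M₀ / (4 * L) + M₀ / (4 * L) = M₀ / (2 * L) := by ring
    linarith
  have hnn : (0:ℝ) ≤ ‖η₁ - η₂‖ := norm_nonneg _
  have h2 : L * ‖η₁ - η₂‖ * ‖η₁ - η₂‖ ≤ (1/2) * (M₀ * ‖η₁ - η₂‖) := by
    have h3 : L * ‖η₁ - η₂‖ ≤ M₀ / 2 := by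
      calc L * ‖η₁ - η₂‖ ≤ L * (M₀ / (2 * L)) := by gcongr
        _ = M₀ / 2 := by field_simp
    nlinarith
  have := hlow η₁ h₁ η₂ h₂
  calc |𝓜 η₁ - 𝓜 η₂ - ⟪G η₂, η₁ - η₂⟫| = ‖𝓜 η₁ - 𝓜 η₂ - ⟪G η₂, η₁ - η₂⟫‖ := rfl
    _ ≤ L * ‖η₁ - η₂‖ * ‖η₁ - η₂‖ := key
    _ ≤ (1/2) * (M₀ * ‖η₁ - η₂‖) := h2
    _ ≤ (1/2) * |𝓜 η₁ - 𝓜 η₂| := by linarith
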